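/- arXiv:2504.01715 — 6 statements merged into one kernel-verified Lean document; each statement's English description precedes it below -/
import Mathlib

section
/- Let Ω ⊆ ℝⁿ be a bounded open set and let λ ∈ ℝ. If u : Ω → ℝ is continuous, positive, and a viscosity solution of −min{|∇u| − λu, Δ∞u} = 0 in Ω, then v = log u is a viscosity solution of −min{|∇v| − λ, Δ∞v + |∇v|⁴} = 0 in Ω. -/
open scoped Topology InnerProductSpace
open Filter

/-- The infinity Laplacian `Δ∞φ(x) = ⟨D²φ(x)·∇φ(x), ∇φ(x)⟩`. -/
noncomputable def infLap {n : ℕ} (φ : EuclideanSpace ℝ (Fin n) → ℝ)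
    (x : EuclideanSpace ℝ (Fin n)) : ℝ :=
  ⟪(fderiv ℝ (gradient φ) x) (gradient φ x), gradient φ x⟫_ℝ

/-- Viscosity supersolution of `-min{|∇u| - λu, Δ∞u} = 0` in `Ω`. -/
def IsViscSupersolEig {n : ℕ} (lam : ℝ) (Ω : Set (EuclideanSpace ℝ (Fin n)))
    (u : EuclideanSpace ℝ (Fin n) → ℝ) : Prop :=
  ∀ x₀ ∈ Ω, ∀ φ : EuclideanSpace ℝ (Fin n) → ℝ, ContDiffAt ℝ 2 φ x₀ → φ x₀ = u x₀ →
    IsLocalMinOn (fun x => u x - φ x) Ω x₀ →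
    min (‖gradient φ x₀‖ - lam * φ x₀) (infLap φ x₀) ≤ 0

/-- Viscosity subsolution of `-min{|∇u| - λu, Δ∞u} = 0` in `Ω`. -/
def IsViscSubsolEig {n : ℕ} (lam : ℝ) (Ω : Set (EuclideanSpace ℝ (Fin n)))
    (u : EuclideanSpace ℝ (Fin n) → ℝ) : Prop :=
  ∀ x₀ ∈ Ω, ∀ φ : EuclideanSpace ℝ (Fin n) → ℝ, ContDiffAt ℝ 2 φ x₀ → φ x₀ = u x₀ →
    IsLocalMaxOn (fun x => u x - φ x) Ω x₀ →
    0 ≤ min (‖gradient φ x₀‖ - lam * φ x₀) (infLap φ x₀)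

/-- Viscosity solution of `-min{|∇u| - λu, Δ∞u} = 0` in `Ω`. -/
def IsViscSolEig {n : ℕ} (lam : ℝ) (Ω : Set (EuclideanSpace ℝ (Fin n)))
    (u : EuclideanSpace ℝ (Fin n) → ℝ) : Prop :=
  IsViscSupersolEig lam Ω u ∧ IsViscSubsolEig lam Ω u

/-- Viscosity supersolution of `-min{|∇v| - λ, Δ∞v + |∇v|⁴} = 0` in `Ω`. -/
def IsViscSupersolLog {n : ℕ} (lam : ℝ) (Ω : Set (EuclideanSpace ℝ (Fin n)))
    (v : EuclideanSpace ℝ (Fin n) → ℝ) : Prop :=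
  ∀ x₀ ∈ Ω, ∀ φ : EuclideanSpace ℝ (Fin n) → ℝ, ContDiffAt ℝ 2 φ x₀ → φ x₀ = v x₀ →
    IsLocalMinOn (fun x => v x - φ x) Ω x₀ →
    min (‖gradient φ x₀‖ - lam) (infLap φ x₀ + ‖gradient φ x₀‖ ^ 4) ≤ 0

/-- Viscosity subsolution of `-min{|∇v| - λ, Δ∞v + |∇v|⁴} = 0` in `Ω`. -/
def IsViscSubsolLog {n : ℕ} (lam : ℝ) (Ω : Set (EuclideanSpace ℝ (Fin n)))
    (v : EuclideanSpace ℝ (Fin n) → ℝ) : Prop :=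
  ∀ x₀ ∈ Ω, ∀ φ : EuclideanSpace ℝ (Fin n) → ℝ, ContDiffAt ℝ 2 φ x₀ → φ x₀ = v x₀ →
    IsLocalMaxOn (fun x => v x - φ x) Ω x₀ →
    0 ≤ min (‖gradient φ x₀‖ - lam) (infLap φ x₀ + ‖gradient φ x₀‖ ^ 4)

/-- Viscosity solution of `-min{|∇v| - λ, Δ∞v + |∇v|⁴} = 0` in `Ω`. -/
def IsViscSolLog {n : ℕ} (lam : ℝ) (Ω : Set (EuclideanSpace ℝ (Fin n)))
    (v : EuclideanSpace ℝ (Fin n) → ℝ) : Prop :=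
  IsViscSupersolLog lam Ω v ∧ IsViscSubsolLog lam Ω v

/-!
If `φ` touches `log u` from below (above) at `x₀`, then `exp ∘ φ` touches `u` from below (above)
there, because `exp` is increasing. The chain rule gives `|∇(e^φ)| - λ e^φ = e^φ (|∇φ| - λ)` and
`Δ∞(e^φ) = e^{3φ} (Δ∞φ + |∇φ|⁴)`, so each viscosity inequality for `u` at `e^φ` is a positive
multiple of the corresponding one for `log u` at `φ`.
-/

open Real

theorem min_mul_mul_nonpos_iff {a b c d : ℝ} (hc : 0 < c) (hd : 0 < d) :
    min (c * a) (d * b) ≤ 0 ↔ min a b ≤ 0 := by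
  simp only [← not_lt, lt_min_iff, mul_pos_iff_of_pos_left hc, mul_pos_iff_of_pos_left hd]

theorem min_mul_mul_nonneg_iff {a b c d : ℝ} (hc : 0 < c) (hd : 0 < d) :
    0 ≤ min (c * a) (d * b) ↔ 0 ≤ min a b := by
  simp only [le_min_iff, mul_nonneg_iff_of_pos_left hc, mul_nonneg_iff_of_pos_left hd]

section LocalExtr

variable {α : Type*} [TopologicalSpace α] {s : Set α} {u φ : α → ℝ} {x₀ : α}

theorem IsLocalMinOn.sub_exp_of_log_sub (hu : ∀ x ∈ s, 0 < u x) (hx₀ : exp (φ x₀) = u x₀)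
    (h : IsLocalMinOn (fun x => log (u x) - φ x) s x₀) :
    IsLocalMinOn (fun x => u x - exp (φ x)) s x₀ := by
  filter_upwards [h, self_mem_nhdsWithin] with x hx hxs
  rw [← hx₀, log_exp, sub_self, sub_nonneg] at hx
  rw [hx₀, sub_self, sub_nonneg]
  exact (le_log_iff_exp_le (hu x hxs)).1 hx

theorem IsLocalMaxOn.sub_exp_of_log_sub (hu : ∀ x ∈ s, 0 < u x) (hx₀ : exp (φ x₀) = u x₀)
    (h : IsLocalMaxOn (fun x => log (u x) - φ x) s x₀) :
    IsLocalMaxOn (fun x => u x - exp (φ x)) s x₀ := by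
  filter_upwards [h, self_mem_nhdsWithin] with x hx hxs
  rw [← hx₀, log_exp, sub_self, sub_nonpos] at hx
  rw [hx₀, sub_self, sub_nonpos]
  exact (log_le_iff_le_exp (hu x hxs)).1 hx

end LocalExtr

section Gradient

variable {F : Type*} [NormedAddCommGroup F] [InnerProductSpace ℝ F] [CompleteSpace F]
  {φ : F → ℝ} {x₀ : F}

theorem gradient_exp_comp (hφ : DifferentiableAt ℝ φ x₀) :
    gradient (fun x => exp (φ x)) x₀ = exp (φ x₀) • gradient φ x₀ := by
  rw [(hasFDerivAt_iff_hasGradientAt.1 hφ.hasFDerivAt.exp).gradient, map_smul, gradient]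

theorem norm_gradient_exp_comp (hφ : DifferentiableAt ℝ φ x₀) :
    ‖gradient (fun x => exp (φ x)) x₀‖ = exp (φ x₀) * ‖gradient φ x₀‖ := by
  rw [gradient_exp_comp hφ, norm_smul, norm_of_nonneg (exp_pos _).le]

theorem ContDiffAt.differentiableAt_gradient (hφ : ContDiffAt ℝ 2 φ x₀) :
    DifferentiableAt ℝ (gradient φ) x₀ :=
  ((InnerProductSpace.toDual ℝ F).symm.contDiff.contDiffAt.comp x₀
    (hφ.fderiv_right (m := 1) le_rfl)).differentiableAt one_ne_zero

theorem hasFDerivAt_gradient_exp_comp (hφ : ContDiffAt ℝ 2 φ x₀) :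
    HasFDerivAt (gradient fun x => exp (φ x))
      (exp (φ x₀) • fderiv ℝ (gradient φ) x₀ +
        (exp (φ x₀) • fderiv ℝ φ x₀).smulRight (gradient φ x₀)) x₀ := by
  have hgrad : gradient (fun x => exp (φ x)) =ᶠ[𝓝 x₀] fun x => exp (φ x) • gradient φ x := by
    filter_upwards [hφ.eventually (by simp)] with x hx
    exact gradient_exp_comp (hx.differentiableAt two_ne_zero)
  exact ((hφ.differentiableAt two_ne_zero).hasFDerivAt.exp.smul
    hφ.differentiableAt_gradient.hasFDerivAt).congr_of_eventuallyEq hgrad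

end Gradient

theorem infLap_exp_comp {n : ℕ} {φ : EuclideanSpace ℝ (Fin n) → ℝ} {x₀ : EuclideanSpace ℝ (Fin n)}
    (hφ : ContDiffAt ℝ 2 φ x₀) :
    infLap (fun x => exp (φ x)) x₀ = exp (φ x₀) ^ 3 * (infLap φ x₀ + ‖gradient φ x₀‖ ^ 4) := by
  rw [infLap, (hasFDerivAt_gradient_exp_comp hφ).fderiv,
    gradient_exp_comp (hφ.differentiableAt two_ne_zero)]
  simp only [add_apply, smul_apply, ContinuousLinearMap.smulRight_apply, map_smul, smul_eq_mul,
    ← inner_gradient_left, real_inner_self_eq_norm_sq, inner_add_left, real_inner_smul_left,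
    real_inner_smul_right, infLap]
  ring

section Viscosity

variable {n : ℕ} {lam : ℝ} {Ω : Set (EuclideanSpace ℝ (Fin n))} {u : EuclideanSpace ℝ (Fin n) → ℝ}

theorem min_eigenOperator_exp_comp {φ : EuclideanSpace ℝ (Fin n) → ℝ}
    {x₀ : EuclideanSpace ℝ (Fin n)} (hφ : ContDiffAt ℝ 2 φ x₀) :
    min (‖gradient (fun x => exp (φ x)) x₀‖ - lam * exp (φ x₀)) (infLap (fun x => exp (φ x)) x₀) =
      min (exp (φ x₀) * (‖gradient φ x₀‖ - lam))
        (exp (φ x₀) ^ 3 * (infLap φ x₀ + ‖gradient φ x₀‖ ^ 4)) := by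
  rw [norm_gradient_exp_comp (hφ.differentiableAt two_ne_zero), infLap_exp_comp hφ, mul_sub,
    mul_comm lam]

theorem IsViscSupersolEig.log (hsol : IsViscSupersolEig lam Ω u) (hu : ∀ x ∈ Ω, 0 < u x) :
    IsViscSupersolLog lam Ω (fun x => log (u x)) := by
  intro x₀ hx₀ φ hφ hφx₀ hmin
  have hexp : exp (φ x₀) = u x₀ := by rw [hφx₀, exp_log (hu x₀ hx₀)]
  have key := hsol x₀ hx₀ _ hφ.exp hexp (hmin.sub_exp_of_log_sub hu hexp)
  rwa [min_eigenOperator_exp_comp hφ, min_mul_mul_nonpos_iff (exp_pos _) (pow_pos (exp_pos _) 3)]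
    at key

theorem IsViscSubsolEig.log (hsol : IsViscSubsolEig lam Ω u) (hu : ∀ x ∈ Ω, 0 < u x) :
    IsViscSubsolLog lam Ω (fun x => log (u x)) := by
  intro x₀ hx₀ φ hφ hφx₀ hmax
  have hexp : exp (φ x₀) = u x₀ := by rw [hφx₀, exp_log (hu x₀ hx₀)]
  have key := hsol x₀ hx₀ _ hφ.exp hexp (hmax.sub_exp_of_log_sub hu hexp)
  rwa [min_eigenOperator_exp_comp hφ, min_mul_mul_nonneg_iff (exp_pos _) (pow_pos (exp_pos _) 3)]
    at key

end Viscosity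

theorem log_of_eigenfunction_is_viscosity_solution_general {n : ℕ}
    (Ω : Set (EuclideanSpace ℝ (Fin n)))
    (lam : ℝ) (u : EuclideanSpace ℝ (Fin n) → ℝ)
    (hupos : ∀ x ∈ Ω, 0 < u x)
    (hsol : IsViscSolEig lam Ω u) :
    IsViscSolLog lam Ω (fun x => Real.log (u x)) :=
  ⟨hsol.1.log hupos, hsol.2.log hupos⟩

/-- if `u` is a positive continuous viscosity solution of
`-min{|∇u| - λu, Δ∞u} = 0` in a bounded open set `Ω`, then `v = log u` is a viscosity solution
of `-min{|∇v| - λ, Δ∞v + |∇v|⁴} = 0` in `Ω`. -/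
theorem log_of_eigenfunction_is_viscosity_solution {n : ℕ}
    (Ω : Set (EuclideanSpace ℝ (Fin n))) (hΩ : IsOpen Ω) (hbdd : Bornology.IsBounded Ω)
    (lam : ℝ) (u : EuclideanSpace ℝ (Fin n) → ℝ)
    (hu : ContinuousOn u Ω) (hupos : ∀ x ∈ Ω, 0 < u x)
    (hsol : IsViscSolEig lam Ω u) :
    IsViscSolLog lam Ω (fun x => Real.log (u x)) :=
  log_of_eigenfunction_is_viscosity_solution_general Ω lam u hupos hsol
end

section
/- Let β > 0, let (p_j) be a sequence of real numbers with p_j > 4 and p_j → ∞, and let (λ_j) be real numbers with λ_j < 0 and (−λ_j)^{1/p_j} → β. Let φ be a C² function on an open neighborhood of a point x₀ ∈ ℝⁿ with φ(x₀) > 0, and let (x_j) be a sequence in this neighborhood with x_j → x₀ and φ(x_j) > 0 for all j. Assume that for every j: −|∇φ(x_j)|^{p_j−2} Δφ(x_j) − (p_j−2)|∇φ(x_j)|^{p_j−4} Δ∞φ(x_j) − λ_j φ(x_j)^{p_j−1} ≤ 0, where the two terms involving powers of |∇φ(x_j)| are interpreted as 0 when ∇φ(x_j) = 0. Then |∇φ(x₀)|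 ≥ βφ(x₀) and Δ∞φ(x₀) ≥ 0, i.e. min{|∇φ(x₀)| − βφ(x₀), Δ∞φ(x₀)} ≥ 0. -/
open scoped Topology InnerProductSpace
open Filter

/-- The Laplacian `Δφ(x)`, the trace of the Hessian. -/
noncomputable def lapl {n : ℕ} (φ : EuclideanSpace ℝ (Fin n) → ℝ)
    (x : EuclideanSpace ℝ (Fin n)) : ℝ :=
  ∑ i, ⟪(fderiv ℝ (gradient φ) x) (EuclideanSpace.single i 1), EuclideanSpace.single i (1:ℝ)⟫_ℝ

/-- The second-order expression `-|∇φ(x)|^{p-2} Δφ(x) - (p-2)|∇φ(x)|^{p-4} Δ∞φ(x)` appearing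
in the viscosity formulation of `-Δ_p`, interpreted as `0` when `∇φ(x) = 0`. -/
noncomputable def pLapOp {n : ℕ} (p : ℝ) (φ : EuclideanSpace ℝ (Fin n) → ℝ)
    (x : EuclideanSpace ℝ (Fin n)) : ℝ :=
  letI := Classical.propDecidable (gradient φ x = 0)
  if gradient φ x = 0 then 0
  else -(‖gradient φ x‖ ^ (p - 2) * lapl φ x)
        - (p - 2) * ‖gradient φ x‖ ^ (p - 4) * infLap φ x

lemma aux_exp_lin (d c e : ℝ) (hd : 0 < d) :
    Tendsto (fun s : ℝ => d * Real.exp s - (c * s + e)) atTop atTop := by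
  have h := Real.tendsto_exp_div_pow_atTop 1
  apply tendsto_atTop_mono' atTop ?_ tendsto_id
  filter_upwards [h.eventually_ge_atTop ((|c| + 2) / d), eventually_ge_atTop (|e| + 1)]
    with s h1 h2
  have hs : (0:ℝ) < s := lt_of_lt_of_le (by positivity) h2
  rw [pow_one] at h1
  have key : (|c| + 2) * s ≤ d * Real.exp s := by
    rw [div_le_div_iff₀ hd hs] at h1
    linarith
  have h3 : c * s ≤ |c| * s := mul_le_mul_of_nonneg_right (le_abs_self c) hs.le
  have h4 : e ≤ |e| := le_abs_self e
  simp only [id]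
  nlinarith

lemma aux_exp_tendsto (d K C' q : ℝ) (hd : 0 < d) (hq : 1 < q) :
    Tendsto (fun t : ℝ => d * q ^ (t - 4) - ((t - 2) * K + C')) atTop atTop := by
  have hq0 : (0:ℝ) < q := lt_trans one_pos hq
  have hL : 0 < Real.log q := Real.log_pos hq
  have hsub : Tendsto (fun t : ℝ => (t - 4) * Real.log q) atTop atTop :=
    (tendsto_atTop_add_const_right _ (-4) tendsto_id).atTop_mul_const hL
  have h := (aux_exp_lin d (K / Real.log q) (2 * K + C') hd).comp hsub
  refine h.congr fun t => ?_
  have : Real.exp ((t - 4) * Real.log q) = q ^ (t - 4) := by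
    rw [Real.rpow_def_of_pos hq0, mul_comm]
  simp only [Function.comp, this]
  field_simp
  ring

/-- passing to the limit in the subsolution inequality for the `p_j`-Laplacian
eigenvalue equation yields `|∇φ(x₀)| ≥ βφ(x₀)` and `Δ∞φ(x₀) ≥ 0`. -/
theorem limit_subsolution_inequality {n : ℕ} (β : ℝ) (hβ : 0 < β)
    (p lam : ℕ → ℝ) (hp : ∀ j, 4 < p j) (hptop : Tendsto p atTop atTop)
    (hlam : ∀ j, lam j < 0)
    (hlim : Tendsto (fun j => (-lam j) ^ (1 / p j)) atTop (𝓝 β))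
    (U : Set (EuclideanSpace ℝ (Fin n))) (hU : IsOpen U)
    (x₀ : EuclideanSpace ℝ (Fin n)) (hx₀ : x₀ ∈ U)
    (φ : EuclideanSpace ℝ (Fin n) → ℝ) (hφ : ContDiffOn ℝ 2 φ U) (hφpos : 0 < φ x₀)
    (x : ℕ → EuclideanSpace ℝ (Fin n)) (hxU : ∀ j, x j ∈ U)
    (hx : Tendsto x atTop (𝓝 x₀)) (hφxj : ∀ j, 0 < φ (x j))
    (hineq : ∀ j, pLapOp (p j) φ (x j) - lam j * φ (x j) ^ (p j - 1) ≤ 0) :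
    β * φ x₀ ≤ ‖gradient φ x₀‖ ∧ 0 ≤ infLap φ x₀ := by
  -- Continuity infrastructure
  have hfd : ContDiffOn ℝ 1 (fun y => fderiv ℝ φ y) U :=
    hφ.fderiv_of_isOpen hU (by norm_num)
  have hgrad : ContDiffOn ℝ 1 (gradient φ) U :=
    ((InnerProductSpace.toDual ℝ (EuclideanSpace ℝ (Fin n))).symm.contDiff).comp_contDiffOn hfd
  have hg : ContinuousOn (gradient φ) U := hgrad.continuousOn
  have hH : ContinuousOn (fun y => fderiv ℝ (gradient φ) y) U :=
    (hgrad.fderiv_of_isOpen (m := 0) hU (by norm_num)).continuousOn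
  have hUnhds : U ∈ 𝓝 x₀ := hU.mem_nhds hx₀
  have tg : Tendsto (fun j => gradient φ (x j)) atTop (𝓝 (gradient φ x₀)) :=
    ((hg.continuousAt hUnhds).tendsto).comp hx
  have ta : Tendsto (fun j => ‖gradient φ (x j)‖) atTop (𝓝 ‖gradient φ x₀‖) := tg.norm
  have hIcont : ContinuousOn (infLap φ) U :=
    ContinuousOn.inner (hH.clm_apply hg) hg
  have hLcont : ContinuousOn (lapl φ) U :=
    continuousOn_finset_sum _ fun i _ =>
      ContinuousOn.inner (hH.clm_apply continuousOn_const) continuousOn_const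
  have tI : Tendsto (fun j => infLap φ (x j)) atTop (𝓝 (infLap φ x₀)) :=
    ((hIcont.continuousAt hUnhds).tendsto).comp hx
  have tL : Tendsto (fun j => lapl φ (x j)) atTop (𝓝 (lapl φ x₀)) :=
    ((hLcont.continuousAt hUnhds).tendsto).comp hx
  have tf : Tendsto (fun j => φ (x j)) atTop (𝓝 (φ x₀)) :=
    ((hφ.continuousOn.continuousAt hUnhds).tendsto).comp hx
  -- The gradient never vanishes along the sequence
  have hgx : ∀ j, gradient φ (x j) ≠ 0 := by
    intro j h0
    have h := hineq j
    have hpow : 0 < φ (x j) ^ (p j - 1) := Real.rpow_pos_of_pos (hφxj j) _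
    have hz : pLapOp (p j) φ (x j) = 0 := by simp [pLapOp, h0]
    rw [hz] at h
    nlinarith [mul_pos (neg_pos.2 (hlam j)) hpow]
  have ha : ∀ j, 0 < ‖gradient φ (x j)‖ := fun j => norm_pos_iff.2 (hgx j)
  -- The key rearranged inequality
  have key : ∀ j, (-lam j) * φ (x j) ^ (p j - 1) ≤
      ‖gradient φ (x j)‖ ^ (p j - 4) *
        (‖gradient φ (x j)‖ ^ 2 * lapl φ (x j) + (p j - 2) * infLap φ (x j)) := by
    intro j
    have h := hineq j
    simp only [pLapOp] at h
    rw [if_neg (hgx j)] at h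
    have hsplit : ‖gradient φ (x j)‖ ^ (p j - 2)
        = ‖gradient φ (x j)‖ ^ (p j - 4) * ‖gradient φ (x j)‖ ^ 2 := by
      rw [show p j - 2 = (p j - 4) + (2:ℝ) by ring, Real.rpow_add (ha j)]
      congr 1
      rw [show (2:ℝ) = ((2:ℕ) : ℝ) by norm_num, Real.rpow_natCast]
    rw [hsplit] at h
    nlinarith [h]
  -- Positivity of the bracket
  have hX : ∀ j, 0 < ‖gradient φ (x j)‖ ^ 2 * lapl φ (x j) + (p j - 2) * infLap φ (x j) := by
    intro j
    by_contra hc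
    push_neg at hc
    have h1 := key j
    have h2 : 0 < (-lam j) * φ (x j) ^ (p j - 1) :=
      mul_pos (neg_pos.2 (hlam j)) (Real.rpow_pos_of_pos (hφxj j) _)
    nlinarith [Real.rpow_pos_of_pos (ha j) (p j - 4)]
  -- Second claim: Δ∞φ(x₀) ≥ 0
  have hinf : 0 ≤ infLap φ x₀ := by
    have hlower : ∀ j,
        -(‖gradient φ (x j)‖ ^ 2 * lapl φ (x j)) / (p j - 2) ≤ infLap φ (x j) := by
      intro j
      rw [div_le_iff₀ (by linarith [hp j] : (0:ℝ) < p j - 2)]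
      nlinarith [hX j]
    have hs : Tendsto (fun j => -(‖gradient φ (x j)‖ ^ 2 * lapl φ (x j)) / (p j - 2))
        atTop (𝓝 0) := by
      have h1 : Tendsto (fun j => -(‖gradient φ (x j)‖ ^ 2 * lapl φ (x j))) atTop
          (𝓝 (-(‖gradient φ x₀‖ ^ 2 * lapl φ x₀))) := ((ta.pow 2).mul tL).neg
      have h2 : Tendsto (fun j => (p j - 2)⁻¹) atTop (𝓝 0) :=
        (tendsto_atTop_add_const_right _ (-2) hptop).inv_tendsto_atTop
      have h3 := h1.mul h2
      rw [mul_zero] at h3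
      exact h3.congr fun j => by rw [div_eq_mul_inv]
    exact le_of_tendsto_of_tendsto' hs tI hlower
  refine ⟨?_, hinf⟩
  -- First claim, by contradiction
  by_contra hcon
  push_neg at hcon
  set A := ‖gradient φ x₀‖ with hAdef
  set B := β * φ x₀ with hBdef
  have hB : 0 < B := mul_pos hβ hφpos
  have hA0 : 0 ≤ A := norm_nonneg _
  set c := (A + B) / 2 with hcdef
  set c' := (A + c) / 2 with hc'def
  have hAc : A < c := by rw [hcdef]; linarith
  have hcB : c < B := by rw [hcdef]; linarith
  have hc0 : 0 < c := lt_of_le_of_lt hA0 hAc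
  have hc'c : c' < c := by rw [hc'def]; linarith
  have hAc' : A < c' := by rw [hc'def]; linarith
  have hc'0 : 0 < c' := lt_of_le_of_lt hA0 hAc'
  set q := c / c' with hqdef
  have hq : 1 < q := (one_lt_div hc'0).2 hc'c
  have hq0 : 0 < q := lt_trans one_pos hq
  set m := fun j => (-lam j) ^ (1 / p j) * φ (x j) with hmdef
  have tm : Tendsto m atTop (𝓝 B) := by
    have := hlim.mul tf
    exact this
  set d := B ^ 4 / (2 * φ x₀) with hddef
  have hd : 0 < d := by positivity
  set K := infLap φ x₀ + 1 with hKdef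
  set C' := A ^ 2 * lapl φ x₀ + 1 with hC'def
  have ev1 : ∀ᶠ j in atTop, c < m j := tm.eventually (eventually_gt_nhds hcB)
  have ev2 : ∀ᶠ j in atTop, ‖gradient φ (x j)‖ < c' :=
    ta.eventually (eventually_lt_nhds hAc')
  have ev3 : ∀ᶠ j in atTop, d * φ (x j) < (m j) ^ 4 := by
    have h1 : Tendsto (fun j => (m j) ^ 4 - d * φ (x j)) atTop
        (𝓝 (B ^ 4 - d * φ x₀)) := (tm.pow 4).sub (tendsto_const_nhds.mul tf)
    have hdphi : d * φ x₀ = B ^ 4 / 2 := by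
      rw [hddef]; field_simp
    have hpos : 0 < B ^ 4 - d * φ x₀ := by rw [hdphi]; nlinarith [pow_pos hB 4]
    filter_upwards [h1.eventually (eventually_gt_nhds hpos)] with j hj
    linarith
  have ev4 : ∀ᶠ j in atTop, infLap φ (x j) < K :=
    tI.eventually (eventually_lt_nhds (by rw [hKdef]; linarith))
  have ev5 : ∀ᶠ j in atTop, ‖gradient φ (x j)‖ ^ 2 * lapl φ (x j) < C' :=
    ((ta.pow 2).mul tL).eventually (eventually_lt_nhds (by rw [hC'def]; linarith))
  have ev6 : ∀ᶠ j in atTop, 0 < d * q ^ (p j - 4) - ((p j - 2) * K + C') :=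
    ((aux_exp_tendsto d K C' q hd hq).comp hptop).eventually_gt_atTop 0
  obtain ⟨j, h1, h2, h3, h4, h5, h6⟩ :=
    (ev1.and (ev2.and (ev3.and (ev4.and (ev5.and ev6))))).exists
  have haj := ha j
  have hfj := hφxj j
  have hpj := hp j
  have hm0 : 0 < m j := lt_trans hc0 h1
  have hqa : q * ‖gradient φ (x j)‖ < m j := by
    have hqa1 : q * ‖gradient φ (x j)‖ < q * c' := mul_lt_mul_of_pos_left h2 hq0
    have hqc : q * c' = c := by rw [hqdef]; field_simp
    linarith
  have hP4 : (0:ℝ) ≤ p j - 4 := by linarith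
  have hQA : q ^ (p j - 4) * ‖gradient φ (x j)‖ ^ (p j - 4) ≤ (m j) ^ (p j - 4) := by
    rw [← Real.mul_rpow hq0.le (haj).le]
    exact Real.rpow_le_rpow (by positivity) hqa.le hP4
  -- m^{P-4} * m^4 = (-λ) f^{P-1} f
  have hlamneg : (0:ℝ) ≤ -lam j := by linarith [hlam j]
  have e2 : (m j) ^ (p j) = (-lam j) * φ (x j) ^ (p j) := by
    have hpne : p j ≠ 0 := by positivity
    simp only [hmdef]
    rw [Real.mul_rpow (Real.rpow_nonneg hlamneg _) hfj.le, ← Real.rpow_mul hlamneg,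
      one_div, inv_mul_cancel₀ hpne, Real.rpow_one]
  have e1 : (m j) ^ (p j - 4) * (m j) ^ 4 = (m j) ^ (p j) := by
    have h4 : (m j) ^ ((4:ℝ)) = (m j) ^ (4:ℕ) := by
      rw [show (4:ℝ) = ((4:ℕ):ℝ) by norm_num, Real.rpow_natCast]
    rw [Real.rpow_sub hm0, h4, div_mul_cancel₀]
    exact (pow_pos hm0 4).ne'
  have e3 : φ (x j) ^ (p j - 1) * φ (x j) = φ (x j) ^ (p j) := by
    rw [Real.rpow_sub hfj, Real.rpow_one, div_mul_cancel₀ _ hfj.ne']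
  have hstep : (m j) ^ (p j) ≤ ‖gradient φ (x j)‖ ^ (p j - 4) *
      (‖gradient φ (x j)‖ ^ 2 * lapl φ (x j) + (p j - 2) * infLap φ (x j)) * φ (x j) := by
    have hmul := mul_le_mul_of_nonneg_right (key j) hfj.le
    rw [mul_assoc, e3] at hmul
    rw [e2]
    exact hmul
  have hchain : q ^ (p j - 4) * d ≤
      ‖gradient φ (x j)‖ ^ 2 * lapl φ (x j) + (p j - 2) * infLap φ (x j) := by
    have hprod : q ^ (p j - 4) * ‖gradient φ (x j)‖ ^ (p j - 4) * (d * φ (x j)) ≤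
        (m j) ^ (p j - 4) * (m j) ^ 4 := by
      refine mul_le_mul hQA h3.le (by positivity) (Real.rpow_nonneg hm0.le _)
    rw [e1] at hprod
    have hAP : 0 < ‖gradient φ (x j)‖ ^ (p j - 4) := Real.rpow_pos_of_pos haj _
    have hcomb : (q ^ (p j - 4) * d) * (‖gradient φ (x j)‖ ^ (p j - 4) * φ (x j)) ≤
        (‖gradient φ (x j)‖ ^ 2 * lapl φ (x j) + (p j - 2) * infLap φ (x j)) *
          (‖gradient φ (x j)‖ ^ (p j - 4) * φ (x j)) := by
      calc (q ^ (p j - 4) * d) * (‖gradient φ (x j)‖ ^ (p j - 4) * φ (x j))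
          = q ^ (p j - 4) * ‖gradient φ (x j)‖ ^ (p j - 4) * (d * φ (x j)) := by ring
        _ ≤ (m j) ^ (p j) := hprod
        _ ≤ ‖gradient φ (x j)‖ ^ (p j - 4) *
            (‖gradient φ (x j)‖ ^ 2 * lapl φ (x j) + (p j - 2) * infLap φ (x j)) *
              φ (x j) := hstep
        _ = (‖gradient φ (x j)‖ ^ 2 * lapl φ (x j) + (p j - 2) * infLap φ (x j)) *
            (‖gradient φ (x j)‖ ^ (p j - 4) * φ (x j)) := by ring
    exact le_of_mul_le_mul_right hcomb (by positivity)
  have hIK : (p j - 2) * infLap φ (x j) ≤ (p j - 2) * K :=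
    mul_le_mul_of_nonneg_left h4.le (by linarith)
  rw [mul_comm] at hchain
  linarith
end

section
/- Let Ω ⊂ ℝⁿ be a bounded open set, let λ > ε > 0, and let Γ ⊆ Ω be an open set such that the distance function d(x) = dist(x, ∂Ω) is differentiable at every point of Γ with |∇d(x)| = 1. Then h(x) = −(λ−ε) d(x) is a viscosity supersolution of −min{|∇v| − λ, Δ∞v + |∇v|⁴} = 0 in Γ. -/
open scoped Topology InnerProductSpace
open Filter

/-- `h(x) = -(λ-ε) dist(x,∂Ω)` is a viscosity supersolution of
`-min{|∇v| - λ, Δ∞v + |∇v|⁴} = 0` in an open set `Γ ⊆ Ω` on which the distance function is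
differentiable with gradient of norm one. -/
theorem dist_supersolution {n : ℕ} (Ω : Set (EuclideanSpace ℝ (Fin n)))
    (hΩ : IsOpen Ω) (hbdd : Bornology.IsBounded Ω)
    (lam ε : ℝ) (hε : 0 < ε) (hlam : ε < lam)
    (Γ : Set (EuclideanSpace ℝ (Fin n))) (hΓ : IsOpen Γ) (hΓΩ : Γ ⊆ Ω)
    (hdiff : ∀ x ∈ Γ,
      DifferentiableAt ℝ (fun y => Metric.infDist y (frontier Ω)) x)
    (hgrad : ∀ x ∈ Γ, ‖gradient (fun y => Metric.infDist y (frontier Ω)) x‖ = 1) :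
    IsViscSupersolLog lam Γ (fun x => -(lam - ε) * Metric.infDist x (frontier Ω)) := by
  intro x₀ hx₀ φ hφ hφx hmin
  set d : EuclideanSpace ℝ (Fin n) → ℝ := fun y => Metric.infDist y (frontier Ω) with hd
  have hφd : DifferentiableAt ℝ φ x₀ := hφ.differentiableAt (by norm_num)
  have hvd : DifferentiableAt ℝ (fun x => -(lam - ε) * d x) x₀ :=
    (hdiff x₀ hx₀).const_mul _
  have hmin' : IsLocalMin (fun x => (-(lam - ε) * d x) - φ x) x₀ :=
    hmin.isLocalMin (hΓ.mem_nhds hx₀)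
  have hfd0 : fderiv ℝ (fun x => (-(lam - ε) * d x) - φ x) x₀ = 0 :=
    hmin'.fderiv_eq_zero
  have hsub : fderiv ℝ (fun x => (-(lam - ε) * d x) - φ x) x₀
      = fderiv ℝ (fun x => -(lam - ε) * d x) x₀ - fderiv ℝ φ x₀ :=
    fderiv_sub hvd hφd
  have heq : fderiv ℝ φ x₀ = fderiv ℝ (fun x => -(lam - ε) * d x) x₀ := by
    have h := hsub.symm.trans hfd0
    rwa [sub_eq_zero, eq_comm] at h
  have hcm : fderiv ℝ (fun x => -(lam - ε) * d x) x₀ = (-(lam - ε)) • fderiv ℝ d x₀ :=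
    fderiv_const_mul (hdiff x₀ hx₀) _
  have hnorm : ‖gradient φ x₀‖ = lam - ε := by
    have h1 : ‖gradient φ x₀‖ = ‖fderiv ℝ φ x₀‖ := by
      rw [gradient]
      exact ((InnerProductSpace.toDual ℝ _).symm.norm_map _)
    have h2 : ‖gradient d x₀‖ = ‖fderiv ℝ d x₀‖ := by
      rw [gradient]
      exact ((InnerProductSpace.toDual ℝ _).symm.norm_map _)
    rw [h1, heq, hcm, norm_smul]
    have h3 : ‖fderiv ℝ d x₀‖ = 1 := by rw [← h2]; exact hgrad x₀ hx₀
    rw [h3, mul_one]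
    rw [Real.norm_eq_abs, abs_neg, abs_of_pos (by linarith : (0:ℝ) < lam - ε)]
  have hle : ‖gradient φ x₀‖ - lam ≤ 0 := by rw [hnorm]; linarith
  exact le_trans (min_le_left _ _) hle
end

section
/- Let n ≥ 1 be an integer, T > 0, β > 0. Let (p_j) be a sequence of real numbers with p_j > 1 and p_j → ∞, and let (λ_j) be real numbers with λ_j < 0 and (−λ_j)^{1/p_j} → β. Let u_j : [0, T] → [0, ∞) be continuous functions converging uniformly on [0, T] to a function u. Then for every t ∈ (0, T], ( (−λ_j) ∫₀^t u_j(s)^{p_j−1} s^{n−1} ds )^{1/(p_j−1)} → β · max_{s ∈ [0,t]} u(s) as j → ∞. -/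
/-!
With `q_j = p_j - 1` and `I_j = ∫₀ᵗ u_j^{q_j} s^{n-1} ds`, the quantity is
`(-λ_j)^{1/q_j} · I_j^{1/q_j}`. The first factor, being `((-λ_j)^{1/p_j})^{p_j/q_j}`, tends
to `β`. The second is the weighted `L^{q_j}` norm of `u_j` on `[0, t]` and tends to the sup
norm of the uniform limit `u`: bounding `u_j` above by `max u + ε` on `[0, t]`, and below by
`max u - ε` on a small interval near a maximum point of `u`, squeezes it between
`(max u ± ε) C^{1/q_j}` with `C > 0` fixed, and `C^{1/q_j} → 1`.
-/

open scoped Topology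
open Filter Set MeasureTheory

lemma tendsto_const_rpow_one_div_of_tendsto_atTop {ι : Type*} {l : Filter ι} {q : ι → ℝ}
    {c : ℝ} (hc : 0 < c) (hq : Tendsto q l atTop) :
    Tendsto (fun i => c ^ (1 / q i)) l (𝓝 1) := by
  simpa [one_div] using tendsto_const_nhds.rpow hq.inv_tendsto_atTop (Or.inl hc.ne')

lemma tendsto_div_sub_const_of_tendsto_atTop {ι : Type*} {l : Filter ι} {p : ι → ℝ} (c : ℝ)
    (hp : Tendsto p l atTop) : Tendsto (fun i => p i / (p i - c)) l (𝓝 1) := by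
  have h : Tendsto (fun i => (1 - c * (p i)⁻¹)⁻¹) l (𝓝 1) := by
    simpa using ((hp.inv_tendsto_atTop.const_mul c).const_sub 1).inv₀ (by simp)
  refine h.congr' ?_
  filter_upwards [hp.eventually_ne_atTop 0, hp.eventually_gt_atTop c] with i hp0 hpc
  have : p i - c ≠ 0 := sub_ne_zero.2 hpc.ne'
  field_simp

lemma tendsto_rpow_one_div_sub_of_tendsto {ι : Type*} {l : Filter ι} {x p : ι → ℝ} {β : ℝ}
    (c : ℝ) (hx : ∀ i, 0 ≤ x i) (hp : Tendsto p l atTop)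
    (hxp : Tendsto (fun i => x i ^ (1 / p i)) l (𝓝 β)) :
    Tendsto (fun i => x i ^ (1 / (p i - c))) l (𝓝 β) := by
  have h := hxp.rpow (tendsto_div_sub_const_of_tendsto_atTop c hp) (Or.inr one_pos)
  rw [Real.rpow_one] at h
  refine h.congr' ?_
  filter_upwards [hp.eventually_ne_atTop 0, hp.eventually_gt_atTop c] with i hp0 hpc
  have : p i - c ≠ 0 := sub_ne_zero.2 hpc.ne'
  rw [← Real.rpow_mul (hx i)]
  field_simp

lemma ContinuousOn.exists_Icc_forall_lt {f : ℝ → ℝ} {a b m s₀ : ℝ}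
    (hf : ContinuousOn f (Icc a b)) (hab : a < b) (hs₀ : s₀ ∈ Icc a b) (hm : m < f s₀) :
    ∃ c d, a ≤ c ∧ c < d ∧ d ≤ b ∧ ∀ s ∈ Icc c d, m < f s := by
  obtain ⟨ε, hε, hball⟩ := Metric.mem_nhdsWithin_iff.1
    ((hf s₀ hs₀).eventually (lt_mem_nhds hm))
  refine ⟨max a (s₀ - ε / 2), min b (s₀ + ε / 2), le_max_left _ _, ?_, min_le_left _ _,
    fun s hs => hball ⟨?_, ?_⟩⟩
  · exact max_lt (lt_min hab (by linarith [hs₀.1])) (lt_min (by linarith [hs₀.2]) (by linarith))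
  · rw [Metric.mem_ball, Real.dist_eq, abs_lt]
    constructor <;> linarith [le_max_right a (s₀ - ε / 2), min_le_right b (s₀ + ε / 2), hs.1, hs.2]
  · exact ⟨le_trans (le_max_left _ _) hs.1, le_trans hs.2 (min_le_left _ _)⟩

lemma rpow_mul_rpow_one_div_eq {m C q : ℝ} (hm : 0 ≤ m) (hC : 0 ≤ C) (hq : q ≠ 0) :
    (m ^ q * C) ^ (1 / q) = m * C ^ (1 / q) := by
  rw [Real.mul_rpow (Real.rpow_nonneg hm _) hC, one_div, Real.rpow_rpow_inv hm hq]

section WeightedIntegral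

variable {a b c d m q : ℝ} {g w : ℝ → ℝ}

lemma intervalIntegral_rpow_mul_rpow_one_div_le (hab : a ≤ b) (hq : 0 < q)
    (hg0 : ∀ s ∈ Icc a b, 0 ≤ g s) (hgm : ∀ s ∈ Icc a b, g s ≤ m)
    (hw0 : ∀ s ∈ Icc a b, 0 ≤ w s)
    (hgi : IntervalIntegrable (fun s => g s ^ q * w s) volume a b)
    (hwi : IntervalIntegrable w volume a b) :
    (∫ s in a..b, g s ^ q * w s) ^ (1 / q) ≤ m * (∫ s in a..b, w s) ^ (1 / q) := by
  have hm : 0 ≤ m := (hg0 a ⟨le_rfl, hab⟩).trans (hgm a ⟨le_rfl, hab⟩)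
  have hint : ∫ s in a..b, g s ^ q * w s ≤ m ^ q * ∫ s in a..b, w s := by
    rw [← intervalIntegral.integral_const_mul]
    refine intervalIntegral.integral_mono_on hab hgi (hwi.const_mul _) fun s hs => ?_
    exact mul_le_mul_of_nonneg_right
      (Real.rpow_le_rpow (hg0 s hs) (hgm s hs) hq.le) (hw0 s hs)
  rw [← rpow_mul_rpow_one_div_eq hm (intervalIntegral.integral_nonneg hab hw0) hq.ne']
  exact Real.rpow_le_rpow
    (intervalIntegral.integral_nonneg hab fun s hs => mul_nonneg (Real.rpow_nonneg (hg0 s hs) _)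
      (hw0 s hs)) hint (one_div_pos.2 hq).le

lemma le_intervalIntegral_rpow_mul_rpow_one_div (hac : a ≤ c) (hcd : c ≤ d) (hdb : d ≤ b)
    (hq : 0 < q) (hm : 0 ≤ m) (hg0 : ∀ s ∈ Icc a b, 0 ≤ g s) (hmg : ∀ s ∈ Icc c d, m ≤ g s)
    (hw0 : ∀ s ∈ Icc a b, 0 ≤ w s)
    (hgi : IntervalIntegrable (fun s => g s ^ q * w s) volume a b)
    (hwi : IntervalIntegrable w volume c d) :
    m * (∫ s in c..d, w s) ^ (1 / q) ≤ (∫ s in a..b, g s ^ q * w s) ^ (1 / q) := by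
  have hcdab : Icc c d ⊆ Icc a b := Icc_subset_Icc hac hdb
  have hint : m ^ q * ∫ s in c..d, w s ≤ ∫ s in a..b, g s ^ q * w s := by
    rw [← intervalIntegral.integral_const_mul]
    calc ∫ s in c..d, m ^ q * w s
        ≤ ∫ s in c..d, g s ^ q * w s := by
          refine intervalIntegral.integral_mono_on hcd (hwi.const_mul _)
            (hgi.mono_set ?_) fun s hs => ?_
          · rw [uIcc_of_le hcd, uIcc_of_le (hac.trans (hcd.trans hdb))]
            exact hcdab
          · exact mul_le_mul_of_nonneg_right (Real.rpow_le_rpow hm (hmg s hs) hq.le)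
              (hw0 s (hcdab hs))
      _ ≤ ∫ s in a..b, g s ^ q * w s := by
          refine intervalIntegral.integral_mono_interval hac hcd hdb
            ((ae_restrict_of_forall_mem measurableSet_Ioc) fun s hs => ?_) hgi
          exact mul_nonneg (Real.rpow_nonneg (hg0 s (Ioc_subset_Icc_self hs)) _)
            (hw0 s (Ioc_subset_Icc_self hs))
  rw [← rpow_mul_rpow_one_div_eq hm
    (intervalIntegral.integral_nonneg hcd fun s hs => hw0 s (hcdab hs)) hq.ne']
  exact Real.rpow_le_rpow (mul_nonneg (Real.rpow_nonneg hm _)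
    (intervalIntegral.integral_nonneg hcd fun s hs => hw0 s (hcdab hs))) hint (one_div_pos.2 hq).le

end WeightedIntegral

section UniformLimit

variable {ι : Type*} {l : Filter ι} {a b y : ℝ} {w : ℝ → ℝ} {q : ι → ℝ} {f : ι → ℝ → ℝ}
  {g : ℝ → ℝ}

lemma eventually_intervalIntegral_rpow_mul_rpow_one_div_lt {M : ℝ} (hab : a < b)
    (hw0 : ∀ s ∈ Icc a b, 0 ≤ w s) (hw : ∀ s ∈ Ioo a b, 0 < w s)
    (hwi : IntervalIntegrable w volume a b) (hq : Tendsto q l atTop)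
    (hf0 : ∀ i, ∀ s ∈ Icc a b, 0 ≤ f i s)
    (hfi : ∀ᶠ i in l, IntervalIntegrable (fun s => f i s ^ q i * w s) volume a b)
    (hfg : TendstoUniformlyOn f g l (Icc a b)) (hgM : ∀ s ∈ Icc a b, g s ≤ M) (hMy : M < y) :
    ∀ᶠ i in l, (∫ s in a..b, f i s ^ q i * w s) ^ (1 / q i) < y := by
  obtain ⟨m, hMm, hmy⟩ := exists_between hMy
  have hC : 0 < ∫ s in a..b, w s := intervalIntegral.intervalIntegral_pos_of_pos_on hwi hw hab
  filter_upwards [hq.eventually_gt_atTop 0, hfi,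
    Metric.tendstoUniformlyOn_iff.1 hfg _ (sub_pos.2 hMm),
    ((tendsto_const_rpow_one_div_of_tendsto_atTop hC hq).const_mul m).eventually_lt_const
      (by simpa using hmy)] with i hqi hii hfgi hmi
  refine lt_of_le_of_lt (intervalIntegral_rpow_mul_rpow_one_div_le hab.le hqi (hf0 i)
    (fun s hs => ?_) hw0 hii hwi) hmi
  have := hfgi s hs
  rw [Real.dist_eq, abs_lt] at this
  linarith [hgM s hs]

lemma eventually_lt_intervalIntegral_rpow_mul_rpow_one_div {s₀ : ℝ} (hab : a < b)
    (hw0 : ∀ s ∈ Icc a b, 0 ≤ w s) (hw : ∀ s ∈ Ioo a b, 0 < w s)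
    (hwi : IntervalIntegrable w volume a b) (hq : Tendsto q l atTop)
    (hf0 : ∀ i, ∀ s ∈ Icc a b, 0 ≤ f i s)
    (hfi : ∀ᶠ i in l, IntervalIntegrable (fun s => f i s ^ q i * w s) volume a b)
    (hfg : TendstoUniformlyOn f g l (Icc a b)) (hgc : ContinuousOn g (Icc a b))
    (hs₀ : s₀ ∈ Icc a b) (hy : y < g s₀) :
    ∀ᶠ i in l, y < (∫ s in a..b, f i s ^ q i * w s) ^ (1 / q i) := by
  rcases lt_or_ge y 0 with hy0 | hy0
  · refine Eventually.of_forall fun i => hy0.trans_le (Real.rpow_nonneg ?_ _)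
    exact intervalIntegral.integral_nonneg hab.le fun s hs =>
      mul_nonneg (Real.rpow_nonneg (hf0 i s hs) _) (hw0 s hs)
  obtain ⟨m₁, hym, hmg⟩ := exists_between hy
  obtain ⟨m₂, hm, hmg'⟩ := exists_between hmg
  obtain ⟨c, d, hac, hcd, hdb, hgcd⟩ := hgc.exists_Icc_forall_lt hab hs₀ hmg'
  have hsub : Icc c d ⊆ Icc a b := Icc_subset_Icc hac hdb
  have hwi' : IntervalIntegrable w volume c d :=
    hwi.mono_set (by rwa [uIcc_of_le hcd.le, uIcc_of_le hab.le])
  have hD : 0 < ∫ s in c..d, w s := intervalIntegral.intervalIntegral_pos_of_pos_on hwi'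
    (fun s hs => hw s (Ioo_subset_Ioo hac hdb hs)) hcd
  filter_upwards [hq.eventually_gt_atTop 0, hfi,
    Metric.tendstoUniformlyOn_iff.1 hfg _ (sub_pos.2 hm),
    ((tendsto_const_rpow_one_div_of_tendsto_atTop hD hq).const_mul m₁).eventually_const_lt
      (by simpa using hym)] with i hqi hii hfgi hmi
  refine hmi.trans_le (le_intervalIntegral_rpow_mul_rpow_one_div hac hcd.le hdb hqi
    (hy0.trans hym.le) (hf0 i) (fun s hs => ?_) hw0 hii hwi')
  have := hfgi s (hsub hs)
  rw [Real.dist_eq, abs_lt] at this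
  linarith [hgcd s hs]

theorem tendsto_intervalIntegral_rpow_mul_rpow_one_div_of_tendstoUniformlyOn [l.NeBot]
    (hab : a < b) (hwc : ContinuousOn w (Icc a b)) (hw0 : ∀ s ∈ Icc a b, 0 ≤ w s)
    (hw : ∀ s ∈ Ioo a b, 0 < w s) (hq : Tendsto q l atTop)
    (hfc : ∀ i, ContinuousOn (f i) (Icc a b)) (hf0 : ∀ i, ∀ s ∈ Icc a b, 0 ≤ f i s)
    (hfg : TendstoUniformlyOn f g l (Icc a b)) :
    Tendsto (fun i => (∫ s in a..b, f i s ^ q i * w s) ^ (1 / q i)) l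
      (𝓝 (sSup (g '' Icc a b))) := by
  have hgc : ContinuousOn g (Icc a b) := hfg.continuousOn (Frequently.of_forall hfc)
  have hK : IsCompact (g '' Icc a b) := isCompact_Icc.image_of_continuousOn hgc
  obtain ⟨s₀, hs₀, hgs₀⟩ := hK.sSup_mem ((nonempty_Icc.2 hab.le).image g)
  have hwi : IntervalIntegrable w volume a b := hwc.intervalIntegrable_of_Icc hab.le
  have hfi : ∀ᶠ i in l, IntervalIntegrable (fun s => f i s ^ q i * w s) volume a b := by
    filter_upwards [hq.eventually_gt_atTop 0] with i hqi
    exact (((hfc i).rpow_const fun _ _ => Or.inr hqi.le).mul hwc).intervalIntegrable_of_Icc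
      hab.le
  refine tendsto_order.2 ⟨fun y hy => ?_, fun y hy => ?_⟩
  · exact eventually_lt_intervalIntegral_rpow_mul_rpow_one_div hab hw0 hw hwi hq hf0 hfi hfg
      hgc hs₀ (hgs₀ ▸ hy)
  · exact eventually_intervalIntegral_rpow_mul_rpow_one_div_lt hab hw0 hw hwi hq hf0 hfi hfg
      (fun s hs => le_csSup hK.bddAbove (mem_image_of_mem g hs)) hy

end UniformLimit

theorem radial_integral_limit_general (n : ℕ) (T β : ℝ)
    (p lam : ℕ → ℝ) (hptop : Tendsto p atTop atTop)
    (hlam : ∀ j, lam j < 0)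
    (hlim : Tendsto (fun j => (-lam j) ^ (1 / p j)) atTop (𝓝 β))
    (uj : ℕ → ℝ → ℝ) (hujc : ∀ j, ContinuousOn (uj j) (Set.Icc 0 T))
    (hujnn : ∀ j, ∀ s ∈ Set.Icc (0:ℝ) T, 0 ≤ uj j s)
    (u : ℝ → ℝ) (hconv : TendstoUniformlyOn uj u atTop (Set.Icc 0 T)) :
    ∀ t ∈ Set.Ioc (0:ℝ) T,
      Tendsto (fun j =>
          ((-lam j) * ∫ s in (0:ℝ)..t, uj j s ^ (p j - 1) * s ^ (n - 1)) ^ (1 / (p j - 1)))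
        atTop (𝓝 (β * sSup (u '' Set.Icc 0 t))) := by
  rintro t ⟨ht0, htT⟩
  have hsub : Icc 0 t ⊆ Icc 0 T := Icc_subset_Icc le_rfl htT
  have hscale := tendsto_rpow_one_div_sub_of_tendsto 1 (fun j => (neg_pos.2 (hlam j)).le)
    hptop hlim
  have hnorm := tendsto_intervalIntegral_rpow_mul_rpow_one_div_of_tendstoUniformlyOn ht0
    (continuous_pow (n - 1)).continuousOn (fun s hs => pow_nonneg hs.1 _)
    (fun s hs => pow_pos hs.1 _) (tendsto_atTop_add_const_right _ (-1) hptop)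
    (fun j => (hujc j).mono hsub) (fun j s hs => hujnn j s (hsub hs)) (hconv.mono hsub)
  refine (hscale.mul hnorm).congr fun j => (Real.mul_rpow (neg_pos.2 (hlam j)).le ?_).symm
  exact intervalIntegral.integral_nonneg ht0.le fun s hs =>
    mul_nonneg (Real.rpow_nonneg (hujnn j s (hsub hs)) _) (pow_nonneg hs.1 _)

/-- for uniformly convergent nonnegative continuous `u_j` on `[0,T]` and
`(-λ_j)^{1/p_j} → β`, for every `t ∈ (0,T]` one has
`((-λ_j) ∫₀ᵗ u_j(s)^{p_j-1} s^{n-1} ds)^{1/(p_j-1)} → β · max_{[0,t]} u`. -/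
theorem radial_integral_limit (n : ℕ) (hn : 1 ≤ n) (T β : ℝ) (hT : 0 < T) (hβ : 0 < β)
    (p lam : ℕ → ℝ) (hp : ∀ j, 1 < p j) (hptop : Tendsto p atTop atTop)
    (hlam : ∀ j, lam j < 0)
    (hlim : Tendsto (fun j => (-lam j) ^ (1 / p j)) atTop (𝓝 β))
    (uj : ℕ → ℝ → ℝ) (hujc : ∀ j, ContinuousOn (uj j) (Set.Icc 0 T))
    (hujnn : ∀ j, ∀ s ∈ Set.Icc (0:ℝ) T, 0 ≤ uj j s)
    (u : ℝ → ℝ) (hconv : TendstoUniformlyOn uj u atTop (Set.Icc 0 T)) :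
    ∀ t ∈ Set.Ioc (0:ℝ) T,
      Tendsto (fun j =>
          ((-lam j) * ∫ s in (0:ℝ)..t, uj j s ^ (p j - 1) * s ^ (n - 1)) ^ (1 / (p j - 1)))
        atTop (𝓝 (β * sSup (u '' Set.Icc 0 t))) :=
  radial_integral_limit_general n T β p lam hptop hlam hlim uj hujc hujnn u hconv
end

section
/- Let β > 0 and let (p_j) be a sequence of real numbers with p_j > 2 and p_j → ∞. Let (a_j), (b_j), (t_j) be real sequences with a_j ≥ 0, b_j > 0, a_j → a, b_j → b > 0, t_j → t, and assume a_j^{p_j−2} t_j ≥ β^{p_j} b_j^{p_j−1} for every j. Then t ≥ 0 and a ≥ βb, i.e. min{a − βb, t} ≥ 0. -/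
open scoped Topology
open Filter

/-- scalar limit step for the boundary viscosity supersolution condition.
If `a_j^{p_j-2} t_j ≥ β^{p_j} b_j^{p_j-1}` with `a_j → a`, `b_j → b > 0`, `t_j → t`
and `p_j → ∞`, then `a ≥ βb` and `t ≥ 0`, i.e. `min{a - βb, t} ≥ 0`. -/
theorem boundary_supersolution_scalar_limit (β : ℝ) (hβ : 0 < β)
    (p a b t : ℕ → ℝ) (hp : ∀ j, 2 < p j) (hptop : Tendsto p atTop atTop)
    (ha0 : ∀ j, 0 ≤ a j) (hb0 : ∀ j, 0 < b j)
    (A B T : ℝ) (hB : 0 < B)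
    (haA : Tendsto a atTop (𝓝 A)) (hbB : Tendsto b atTop (𝓝 B))
    (htT : Tendsto t atTop (𝓝 T))
    (hineq : ∀ j, β ^ p j * b j ^ (p j - 1) ≤ a j ^ (p j - 2) * t j) :
    β * B ≤ A ∧ 0 ≤ T := by
  have hapos : ∀ j, 0 < a j := by
    intro j
    rcases lt_or_eq_of_le (ha0 j) with h | h
    · exact h
    · exfalso
      have h1 := hineq j
      rw [← h, Real.zero_rpow (by have := hp j; intro hc; linarith [hc] : p j - 2 ≠ 0),
        zero_mul] at h1
      have h2 : 0 < β ^ p j * b j ^ (p j - 1) :=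
        mul_pos (Real.rpow_pos_of_pos hβ _) (Real.rpow_pos_of_pos (hb0 j) _)
      linarith
  have htpos : ∀ j, 0 < t j := by
    intro j
    have h1 := hineq j
    have h2 : 0 < β ^ p j * b j ^ (p j - 1) :=
      mul_pos (Real.rpow_pos_of_pos hβ _) (Real.rpow_pos_of_pos (hb0 j) _)
    have h3 : 0 < a j ^ (p j - 2) := Real.rpow_pos_of_pos (hapos j) _
    nlinarith
  have hT : 0 ≤ T := ge_of_tendsto' htT fun j => (htpos j).le
  refine ⟨?_, hT⟩
  by_contra hA
  push_neg at hA
  have hA0 : 0 ≤ A := ge_of_tendsto' haA fun j => ha0 j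
  set m := (A + β * B) / 2 with hm
  set s := (m + β * B) / 2 with hs
  have hm0 : 0 < m := by positivity
  have hms : m < s := by rw [hs]; linarith [hA]
  have hsB : s < β * B := by rw [hs, hm]; linarith [hA]
  set q := s / m with hq
  have hq1 : 1 < q := (one_lt_div hm0).2 hms
  -- eventual bounds
  have h1 : ∀ᶠ j in atTop, a j < m := haA.eventually_lt_const (by rw [hm]; linarith)
  have h2 : ∀ᶠ j in atTop, s < β * b j := by
    have : Tendsto (fun j => β * b j) atTop (𝓝 (β * B)) := hbB.const_mul β
    exact this.eventually_const_lt hsB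
  have h3 : ∀ᶠ j in atTop, B / 2 < b j := hbB.eventually_const_lt (by linarith)
  have key : ∀ᶠ j in atTop, β ^ (2:ℝ) * (B / 2) * q ^ (p j - 2) ≤ t j := by
    filter_upwards [h1, h2, h3] with j hj1 hj2 hj3
    have hpj := hp j
    have haj := hapos j
    have hbj := hb0 j
    -- factorization
    have efac : β ^ p j * b j ^ (p j - 1)
        = (β ^ (2:ℝ) * b j * (β * b j / a j) ^ (p j - 2)) * a j ^ (p j - 2) := by
      have e3 : (β * b j / a j) ^ (p j - 2) * a j ^ (p j - 2)
          = β ^ (p j - 2) * b j ^ (p j - 2) := by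
        rw [← Real.mul_rpow (by positivity) (ha0 j), div_mul_cancel₀ _ (ne_of_gt haj),
          Real.mul_rpow hβ.le hbj.le]
      have e1 : β ^ p j = β ^ (2:ℝ) * β ^ (p j - 2) := by
        rw [← Real.rpow_add hβ]; ring_nf
      have e2 : b j ^ (p j - 1) = b j * b j ^ (p j - 2) := by
        rw [show p j - 1 = 1 + (p j - 2) by ring, Real.rpow_add hbj, Real.rpow_one]
      rw [e1, e2]
      linear_combination (-(β ^ (2:ℝ) * b j)) * e3
    have h4 : β ^ (2:ℝ) * b j * (β * b j / a j) ^ (p j - 2) ≤ t j := by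
      have h5 := hineq j
      rw [efac] at h5
      have h6 : 0 < a j ^ (p j - 2) := Real.rpow_pos_of_pos haj _
      exact le_of_mul_le_mul_right (by linarith [h5]) h6
    have hqle : q ≤ β * b j / a j := by
      rw [hq, div_le_div_iff₀ hm0 haj]
      nlinarith
    have h7 : q ^ (p j - 2) ≤ (β * b j / a j) ^ (p j - 2) :=
      Real.rpow_le_rpow (by positivity) hqle (by linarith)
    have h8 : β ^ (2:ℝ) * (B / 2) ≤ β ^ (2:ℝ) * b j :=
      mul_le_mul_of_nonneg_left hj3.le (Real.rpow_pos_of_pos hβ _).le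
    calc β ^ (2:ℝ) * (B / 2) * q ^ (p j - 2)
        ≤ β ^ (2:ℝ) * b j * (β * b j / a j) ^ (p j - 2) := by
          have hq0 : (0:ℝ) ≤ q ^ (p j - 2) := (Real.rpow_pos_of_pos (by positivity) _).le
          exact mul_le_mul h8 h7 hq0 (by positivity)
      _ ≤ t j := h4
  -- the lower bound tends to infinity
  have hqtop : Tendsto (fun j => q ^ (p j - 2)) atTop atTop := by
    have hlog : 0 < Real.log q := Real.log_pos hq1
    have hexp : Tendsto (fun x : ℝ => q ^ x) atTop atTop := by
      have : Tendsto (fun x : ℝ => Real.exp (x * Real.log q)) atTop atTop :=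
        Real.tendsto_exp_atTop.comp (tendsto_id.atTop_mul_const hlog)
      refine this.congr fun x => ?_
      rw [Real.rpow_def_of_pos (by positivity), mul_comm]
    exact hexp.comp (tendsto_atTop_add_const_right _ (-2) hptop)
  have hmul : Tendsto (fun j => β ^ (2:ℝ) * (B / 2) * q ^ (p j - 2)) atTop atTop := by
    apply Tendsto.const_mul_atTop (by positivity) hqtop
  have : Tendsto t atTop atTop := tendsto_atTop_mono' atTop key hmul
  exact not_tendsto_atTop_of_tendsto_nhds htT this
end

section
/- Let β > 0 and let (p_j) be a sequence of real numbers with p_j > 2 and p_j → ∞. Let (a_j), (b_j), (t_j) be real sequences with a_j ≥ 0, b_j > 0, a_j → a, b_j → b > 0, t_j → t, and assume a_j^{p_j−2} t_j ≤ β^{p_j} b_j^{p_j−1} for every j. Then t ≤ 0 or a ≤ βb, i.e. min{a − βb, t} ≤ 0. -/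
open scoped Topology
open Filter

/-- scalar limit step for the boundary viscosity subsolution condition.
If `a_j^{p_j-2} t_j ≤ β^{p_j} b_j^{p_j-1}` with `a_j → a`, `b_j → b > 0`, `t_j → t`
and `p_j → ∞`, then `t ≤ 0` or `a ≤ βb`, i.e. `min{a - βb, t} ≤ 0`. -/
theorem boundary_subsolution_scalar_limit (β : ℝ) (hβ : 0 < β)
    (p a b t : ℕ → ℝ) (hp : ∀ j, 2 < p j) (hptop : Tendsto p atTop atTop)
    (ha0 : ∀ j, 0 ≤ a j) (hb0 : ∀ j, 0 < b j)
    (A B T : ℝ) (hB : 0 < B)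
    (haA : Tendsto a atTop (𝓝 A)) (hbB : Tendsto b atTop (𝓝 B))
    (htT : Tendsto t atTop (𝓝 T))
    (hineq : ∀ j, a j ^ (p j - 2) * t j ≤ β ^ p j * b j ^ (p j - 1)) :
    T ≤ 0 ∨ A ≤ β * B := by
  by_contra h
  push_neg at h
  obtain ⟨hT, hA⟩ := h
  -- r j = a j / (β * b j) → R > 1
  set r : ℕ → ℝ := fun j => a j / (β * b j) with hr
  have hβB : 0 < β * B := mul_pos hβ hB
  have hRgt : 1 < A / (β * B) := (one_lt_div hβB).mpr hA
  have hrR : Tendsto r atTop (𝓝 (A / (β * B))) :=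
    haA.div (tendsto_const_nhds.mul hbB) (ne_of_gt hβB)
  set q : ℝ := (1 + A / (β * B)) / 2 with hq
  have hq1 : 1 < q := by rw [hq]; linarith
  have hqR : q < A / (β * B) := by rw [hq]; linarith
  -- eventually r j ≥ q
  have h1 : ∀ᶠ j in atTop, q < r j := hrR.eventually_const_lt hqR
  -- eventually t j ≥ T/2
  have h2 : ∀ᶠ j in atTop, T / 2 < t j := htT.eventually_const_lt (by linarith)
  -- key rearranged inequality: r j ^ (p j - 2) * t j ≤ β^2 * b j
  have key : ∀ j, r j ^ (p j - 2) * t j ≤ β ^ (2:ℝ) * b j := by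
    intro j
    have hβb : 0 < β * b j := mul_pos hβ (hb0 j)
    have hpow : (0:ℝ) < (β * b j) ^ (p j - 2) := Real.rpow_pos_of_pos hβb _
    have hrw : β ^ p j * b j ^ (p j - 1)
        = (β * b j) ^ (p j - 2) * (β ^ (2:ℝ) * b j) := by
      rw [Real.mul_rpow hβ.le (hb0 j).le]
      have e1 : β ^ p j = β ^ (p j - 2) * β ^ (2:ℝ) := by
        rw [← Real.rpow_add hβ]; ring_nf
      have e2 : b j ^ (p j - 1) = b j ^ (p j - 2) * b j := by
        rw [show p j - 1 = p j - 2 + 1 by ring, Real.rpow_add (hb0 j), Real.rpow_one]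
      rw [e1, e2]; ring
    have h := hineq j
    rw [hrw] at h
    have hdiv : r j ^ (p j - 2) = a j ^ (p j - 2) / (β * b j) ^ (p j - 2) := by
      rw [hr]
      exact Real.div_rpow (ha0 j) hβb.le _
    rw [hdiv, div_mul_eq_mul_div, div_le_iff₀ hpow]
    calc a j ^ (p j - 2) * t j ≤ (β * b j) ^ (p j - 2) * (β ^ (2:ℝ) * b j) := h
      _ = β ^ (2:ℝ) * b j * (β * b j) ^ (p j - 2) := by ring
  -- eventually q ^ (p j - 2) * (T/2) > β^2 * b j
  have hq0' : (0:ℝ) < q := by linarith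
  have hqtop : Tendsto (fun j => q ^ (p j - 2)) atTop atTop := by
    have hbase : Tendsto (fun x : ℝ => q ^ x) atTop atTop := by
      simp_rw [Real.rpow_def_of_pos hq0']
      exact Real.tendsto_exp_atTop.comp
        (Tendsto.const_mul_atTop (Real.log_pos hq1) tendsto_id)
    exact hbase.comp (tendsto_atTop_add_const_right atTop (-2) hptop)
  have h3 : ∀ᶠ j in atTop, β ^ (2:ℝ) * b j < q ^ (p j - 2) * (T / 2) := by
    have hbd : Tendsto (fun j => β ^ (2:ℝ) * b j) atTop (𝓝 (β ^ (2:ℝ) * B)) :=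
      tendsto_const_nhds.mul hbB
    have hlt : Tendsto (fun j => q ^ (p j - 2) * (T / 2)) atTop atTop :=
      hqtop.atTop_mul_const (by linarith)
    filter_upwards [hlt.eventually_ge_atTop (β ^ (2:ℝ) * B + 1),
      hbd.eventually_lt_const (lt_add_one _)] with j hj1 hj2
    linarith
  obtain ⟨j, hj1, hj2, hj3⟩ := (h1.and (h2.and h3)).exists
  -- contradiction
  have hq0 : 0 < q := by linarith
  have hmono : q ^ (p j - 2) ≤ r j ^ (p j - 2) :=
    Real.rpow_le_rpow hq0.le hj1.le (by linarith [hp j])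
  have hT2 : (0:ℝ) < T / 2 := by linarith
  have : q ^ (p j - 2) * (T / 2) ≤ r j ^ (p j - 2) * t j := by
    have hpos : 0 < q ^ (p j - 2) := Real.rpow_pos_of_pos hq0 _
    calc q ^ (p j - 2) * (T / 2) ≤ r j ^ (p j - 2) * (T / 2) :=
          mul_le_mul_of_nonneg_right hmono hT2.le
      _ ≤ r j ^ (p j - 2) * t j :=
          mul_le_mul_of_nonneg_left hj2.le (hpos.trans_le hmono).le
  linarith [key j]
end
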